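/- arXiv:2311.03870 — 3 statements merged into one kernel-verified Lean document; each statement's English description precedes it below -/
import Mathlib

section
/- Let A: δ₁×δ₂ → ℝ be a nonzero grounded 2-increasing function on a finite mesh. If a real number α and a discrete copula C on the mesh satisfy α·V_C(R_{ij}) ≥ V_A(R_{ij}) for all minimal rectangles R_{ij}, then α ≥ α_A, where α_A = max_{i,j}{ V_A([x_i,x_{i+1}]×[0,1])/(x_{i+1}−x_i), V_A([0,1]×[y_j,y_{j+1}])/(y_{j+1}−y_j) }. -/
open Finset

/-- A mesh on [0,1]: strictly increasing points from 0 to 1. -/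
def IsMesh {k : ℕ} (x : Fin (k+2) → ℝ) : Prop :=
  StrictMono x ∧ x 0 = 0 ∧ x (Fin.last (k+1)) = 1

/-- Volume of a rectangle with vertex indices (i₁,j₁),(i₂,j₂). -/
def VolR {n m : ℕ} (Q : Fin (n+2) → Fin (m+2) → ℝ)
    (i₁ i₂ : Fin (n+2)) (j₁ j₂ : Fin (m+2)) : ℝ :=
  Q i₂ j₂ - Q i₁ j₂ - Q i₂ j₁ + Q i₁ j₁

/-- Volume of the minimal rectangle R_{ij}. -/
def Vol {n m : ℕ} (Q : Fin (n+2) → Fin (m+2) → ℝ)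
    (i : Fin (n+1)) (j : Fin (m+1)) : ℝ :=
  VolR Q i.castSucc i.succ j.castSucc j.succ

/-- Discrete copula on the mesh δ₁ × δ₂ given by `x` and `y`. -/
def IsDiscCopula {n m : ℕ} (x : Fin (n+2) → ℝ) (y : Fin (m+2) → ℝ)
    (C : Fin (n+2) → Fin (m+2) → ℝ) : Prop :=
  (∀ i, C i 0 = 0) ∧ (∀ j, C 0 j = 0) ∧
  (∀ i, C i (Fin.last (m+1)) = x i) ∧ (∀ j, C (Fin.last (n+1)) j = y j) ∧
  (∀ i₁ i₂ j₁ j₂, i₁ ≤ i₂ → j₁ ≤ j₂ → 0 ≤ VolR C i₁ i₂ j₁ j₂)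

/-- Discrete quasi-copula on the mesh δ₁ × δ₂ given by `x` and `y`. -/
def IsDiscQuasiCopula {n m : ℕ} (x : Fin (n+2) → ℝ) (y : Fin (m+2) → ℝ)
    (Q : Fin (n+2) → Fin (m+2) → ℝ) : Prop :=
  (∀ i, Q i 0 = 0) ∧ (∀ j, Q 0 j = 0) ∧
  (∀ i, Q i (Fin.last (m+1)) = x i) ∧ (∀ j, Q (Fin.last (n+1)) j = y j) ∧
  (∀ i₁ i₂ j, i₁ ≤ i₂ → Q i₁ j ≤ Q i₂ j) ∧
  (∀ i j₁ j₂, j₁ ≤ j₂ → Q i j₁ ≤ Q i j₂) ∧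
  (∀ i₁ i₂ j₁ j₂, |Q i₂ j₂ - Q i₁ j₁| ≤ |x i₂ - x i₁| + |y j₂ - y j₁|)

/-- The optimal mass-domination constant α_A. -/
noncomputable def alphaA {n m : ℕ} (x : Fin (n+2) → ℝ) (y : Fin (m+2) → ℝ)
    (A : Fin (n+2) → Fin (m+2) → ℝ) : ℝ :=
  max (⨆ i : Fin (n+1),
        VolR A i.castSucc i.succ 0 (Fin.last (m+1)) / (x i.succ - x i.castSucc))
      (⨆ j : Fin (m+1),
        VolR A 0 (Fin.last (n+1)) j.castSucc j.succ / (y j.succ - y j.castSucc))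

/-- The upper bound copula C̄_A. -/
noncomputable def Cbar {n m : ℕ} (x : Fin (n+2) → ℝ) (y : Fin (m+2) → ℝ)
    (A : Fin (n+2) → Fin (m+2) → ℝ) (i : Fin (n+2)) (j : Fin (m+2)) : ℝ :=
  min (x i - VolR A 0 i j (Fin.last (m+1)) / alphaA x y A)
      (y j - VolR A i (Fin.last (n+1)) 0 j / alphaA x y A)

/-- The lower bound copula C̲_A. -/
noncomputable def Cunder {n m : ℕ} (x : Fin (n+2) → ℝ) (y : Fin (m+2) → ℝ)
    (A : Fin (n+2) → Fin (m+2) → ℝ) (i : Fin (n+2)) (j : Fin (m+2)) : ℝ :=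
  max (VolR A 0 i 0 j / alphaA x y A)
      (x i + y j - 1 + VolR A i (Fin.last (n+1)) j (Fin.last (m+1)) / alphaA x y A)

/-! Summing `V_A(R_ij) ≤ α V_C(R_ij)` over a vertical (horizontal) strip telescopes to
`V_A(strip) ≤ α V_C(strip)`, and the uniform margins of `C` make `V_C(strip)` the width of the
strip. -/

theorem Fin.sum_univ_succ_sub_castSucc {M : Type*} [AddCommGroup M] {k : ℕ}
    (f : Fin (k + 1) → M) :
    ∑ i : Fin k, (f i.succ - f i.castSucc) = f (Fin.last k) - f 0 := by
  induction k with
  | zero => simp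
  | succ k ih =>
    rw [Fin.sum_univ_castSucc, Fin.succ_last]
    have h := ih fun i => f i.castSucc
    rw [Fin.castSucc_zero] at h
    simp only [Fin.succ_castSucc, h]
    abel

theorem IsMesh.sub_pos {k : ℕ} {x : Fin (k+2) → ℝ} (hx : IsMesh x) (i : Fin (k+1)) :
    0 < x i.succ - x i.castSucc :=
  _root_.sub_pos.2 (hx.1 Fin.castSucc_lt_succ)

section Volume

variable {n m : ℕ}

theorem sum_vol_eq_volR_row (Q : Fin (n+2) → Fin (m+2) → ℝ) (i : Fin (n+1)) :
    ∑ j, Vol Q i j = VolR Q i.castSucc i.succ 0 (Fin.last (m+1)) := by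
  let g := fun j => Q i.succ j - Q i.castSucc j
  calc ∑ j, Vol Q i j = ∑ j : Fin (m+1), (g j.succ - g j.castSucc) :=
        sum_congr rfl fun j _ => by simp only [g, Vol, VolR]; ring
    _ = VolR Q i.castSucc i.succ 0 (Fin.last (m+1)) := by
        rw [Fin.sum_univ_succ_sub_castSucc]; simp only [g, VolR]; ring

theorem sum_vol_eq_volR_col (Q : Fin (n+2) → Fin (m+2) → ℝ) (j : Fin (m+1)) :
    ∑ i, Vol Q i j = VolR Q 0 (Fin.last (n+1)) j.castSucc j.succ := by
  let g := fun i => Q i j.succ - Q i j.castSucc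
  calc ∑ i, Vol Q i j = ∑ i : Fin (n+1), (g i.succ - g i.castSucc) :=
        sum_congr rfl fun i _ => by simp only [g, Vol, VolR]; ring
    _ = VolR Q 0 (Fin.last (n+1)) j.castSucc j.succ := by
        rw [Fin.sum_univ_succ_sub_castSucc]; simp only [g, VolR]; ring

theorem IsDiscCopula.volR_row_strip {x : Fin (n+2) → ℝ} {y : Fin (m+2) → ℝ}
    {C : Fin (n+2) → Fin (m+2) → ℝ} (hC : IsDiscCopula x y C) (i₁ i₂ : Fin (n+2)) :
    VolR C i₁ i₂ 0 (Fin.last (m+1)) = x i₂ - x i₁ := by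
  simp only [VolR, hC.1, hC.2.2.1]
  ring

theorem IsDiscCopula.volR_col_strip {x : Fin (n+2) → ℝ} {y : Fin (m+2) → ℝ}
    {C : Fin (n+2) → Fin (m+2) → ℝ} (hC : IsDiscCopula x y C) (j₁ j₂ : Fin (m+2)) :
    VolR C 0 (Fin.last (n+1)) j₁ j₂ = y j₂ - y j₁ := by
  simp only [VolR, hC.2.1, hC.2.2.2.1]
  ring

variable {A C : Fin (n+2) → Fin (m+2) → ℝ} {α : ℝ}

theorem volR_row_le_of_vol_le (hdom : ∀ i j, Vol A i j ≤ α * Vol C i j) (i : Fin (n+1)) :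
    VolR A i.castSucc i.succ 0 (Fin.last (m+1)) ≤
      α * VolR C i.castSucc i.succ 0 (Fin.last (m+1)) := by
  rw [← sum_vol_eq_volR_row, ← sum_vol_eq_volR_row, mul_sum]
  exact sum_le_sum fun j _ => hdom i j

theorem volR_col_le_of_vol_le (hdom : ∀ i j, Vol A i j ≤ α * Vol C i j) (j : Fin (m+1)) :
    VolR A 0 (Fin.last (n+1)) j.castSucc j.succ ≤
      α * VolR C 0 (Fin.last (n+1)) j.castSucc j.succ := by
  rw [← sum_vol_eq_volR_col, ← sum_vol_eq_volR_col, mul_sum]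
  exact sum_le_sum fun i _ => hdom i j

end Volume

theorem stmt7_general {n m : ℕ} (x : Fin (n+2) → ℝ) (y : Fin (m+2) → ℝ)
    (A C : Fin (n+2) → Fin (m+2) → ℝ) (α : ℝ)
    (hx : IsMesh x) (hy : IsMesh y)
    (hC : IsDiscCopula x y C)
    (hdom : ∀ i j, Vol A i j ≤ α * Vol C i j) :
    alphaA x y A ≤ α := by
  refine max_le (ciSup_le fun i => ?_) (ciSup_le fun j => ?_)
  · rw [div_le_iff₀ (hx.sub_pos i), ← hC.volR_row_strip]
    exact volR_row_le_of_vol_le hdom i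
  · rw [div_le_iff₀ (hy.sub_pos j), ← hC.volR_col_strip]
    exact volR_col_le_of_vol_le hdom j

theorem stmt7 {n m : ℕ} (x : Fin (n+2) → ℝ) (y : Fin (m+2) → ℝ)
    (A C : Fin (n+2) → Fin (m+2) → ℝ) (α : ℝ)
    (hx : IsMesh x) (hy : IsMesh y)
    (hg1 : ∀ i, A i 0 = 0) (hg2 : ∀ j, A 0 j = 0)
    (h2inc : ∀ i₁ i₂ j₁ j₂, i₁ ≤ i₂ → j₁ ≤ j₂ → 0 ≤ VolR A i₁ i₂ j₁ j₂)
    (hne : ∃ i j, A i j ≠ 0)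
    (hC : IsDiscCopula x y C)
    (hdom : ∀ i j, Vol A i j ≤ α * Vol C i j) :
    alphaA x y A ≤ α :=
  stmt7_general x y A C α hx hy hC hdom
end

section
/- For a discrete quasi-copula Q on a finite mesh, write Q = Q_pos − Q_neg where Q_pos and Q_neg are the (unique) grounded functions on the mesh with V_{Q_pos}(R_{ij}) = max{V_Q(R_{ij}),0} and V_{Q_neg}(R_{ij}) = −min{V_Q(R_{ij}),0} for all minimal rectangles R_{ij}. If Q is a proper (i.e., not a copula) discrete quasi-copula, then α_{Q_pos} − α_{Q_neg} = 1, where for a nonzero grounded 2-increasing function A, α_A = max_{i,j}{ V_A([x_i,x_{i+1}]×[0,1])/(x_{i+1}−x_i), V_A([0,1]×[y_j,y_{j+1}])/(y_{j+1}−y_j) }. -/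
/-!
Cellwise `V_Qpos = V_Q + V_Qneg`, and the volume of a strip `[xᵢ, xᵢ₊₁] × [0, 1]` or
`[0, 1] × [yⱼ, yⱼ₊₁]` is the sum of the volumes of its cells, so the same identity holds for strips.
Because `Q` is grounded with uniform margins, its strip volumes are exactly `xᵢ₊₁ - xᵢ` and
`yⱼ₊₁ - yⱼ`. Hence every ratio in `α_Qpos` is `1 +` the corresponding ratio in `α_Qneg`, and the
maximum commutes with adding `1`.
-/

open Finset

theorem Fin.sum_succ_sub_castSucc {M : Type*} [AddCommGroup M] {k : ℕ} (g : Fin (k+1) → M) :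
    ∑ j : Fin k, (g j.succ - g j.castSucc) = g (Fin.last k) - g 0 := by
  have h := (Fin.sum_univ_succ g).symm.trans (Fin.sum_univ_castSucc g)
  rw [Finset.sum_sub_distrib, sub_eq_sub_iff_add_eq_add, add_comm, h, add_comm]

theorem Real.ciSup_const_add {ι : Type*} [Finite ι] [Nonempty ι] (c : ℝ) (f : ι → ℝ) :
    ⨆ i, (c + f i) = c + ⨆ i, f i :=
  ((OrderIso.addLeft c).map_ciSup (Set.finite_range f).bddAbove).symm

section Volumes

variable {n m : ℕ}

theorem sum_vol_row (A : Fin (n+2) → Fin (m+2) → ℝ) (i : Fin (n+1)) :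
    ∑ j, Vol A i j = VolR A i.castSucc i.succ 0 (Fin.last (m+1)) := by
  refine (Finset.sum_congr rfl fun j _ => ?_).trans
    ((Fin.sum_succ_sub_castSucc fun j => A i.succ j - A i.castSucc j).trans ?_) <;>
  simp only [Vol, VolR] <;> ring

theorem sum_vol_col (A : Fin (n+2) → Fin (m+2) → ℝ) (j : Fin (m+1)) :
    ∑ i, Vol A i j = VolR A 0 (Fin.last (n+1)) j.castSucc j.succ := by
  refine (Finset.sum_congr rfl fun i _ => ?_).trans
    ((Fin.sum_succ_sub_castSucc fun i => A i j.succ - A i j.castSucc).trans ?_) <;>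
  simp only [Vol, VolR] <;> ring

theorem volR_row_add_of_vol_eq_add {A B C : Fin (n+2) → Fin (m+2) → ℝ}
    (h : ∀ i j, Vol A i j = Vol B i j + Vol C i j) (i : Fin (n+1)) :
    VolR A i.castSucc i.succ 0 (Fin.last (m+1)) =
      VolR B i.castSucc i.succ 0 (Fin.last (m+1)) + VolR C i.castSucc i.succ 0 (Fin.last (m+1)) := by
  simp only [← sum_vol_row, h, Finset.sum_add_distrib]

theorem volR_col_add_of_vol_eq_add {A B C : Fin (n+2) → Fin (m+2) → ℝ}
    (h : ∀ i j, Vol A i j = Vol B i j + Vol C i j) (j : Fin (m+1)) :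
    VolR A 0 (Fin.last (n+1)) j.castSucc j.succ =
      VolR B 0 (Fin.last (n+1)) j.castSucc j.succ + VolR C 0 (Fin.last (n+1)) j.castSucc j.succ := by
  simp only [← sum_vol_col, h, Finset.sum_add_distrib]

theorem volR_row_of_margin {Q : Fin (n+2) → Fin (m+2) → ℝ} {x : Fin (n+2) → ℝ}
    (hQ0 : ∀ i, Q i 0 = 0) (hQ1 : ∀ i, Q i (Fin.last (m+1)) = x i) (i₁ i₂ : Fin (n+2)) :
    VolR Q i₁ i₂ 0 (Fin.last (m+1)) = x i₂ - x i₁ := by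
  simp only [VolR, hQ0, hQ1]; ring

theorem volR_col_of_margin {Q : Fin (n+2) → Fin (m+2) → ℝ} {y : Fin (m+2) → ℝ}
    (hQ0 : ∀ j, Q 0 j = 0) (hQ1 : ∀ j, Q (Fin.last (n+1)) j = y j) (j₁ j₂ : Fin (m+2)) :
    VolR Q 0 (Fin.last (n+1)) j₁ j₂ = y j₂ - y j₁ := by
  simp only [VolR, hQ0, hQ1]; ring

end Volumes

theorem div_eq_one_add_of_eq_add {a b d : ℝ} (hd : d ≠ 0) (h : a = d + b) : a / d = 1 + b / d := by
  rw [h, add_div, div_self hd]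

theorem alphaA_eq_one_add_of_vol_eq_add {n m : ℕ} {x : Fin (n+2) → ℝ} {y : Fin (m+2) → ℝ}
    {Q A B : Fin (n+2) → Fin (m+2) → ℝ} (hx : StrictMono x) (hy : StrictMono y)
    (hQ0x : ∀ i, Q i 0 = 0) (hQ0y : ∀ j, Q 0 j = 0)
    (hQ1x : ∀ i, Q i (Fin.last (m+1)) = x i) (hQ1y : ∀ j, Q (Fin.last (n+1)) j = y j)
    (h : ∀ i j, Vol A i j = Vol Q i j + Vol B i j) :
    alphaA x y A = 1 + alphaA x y B := by
  have hrow (i : Fin (n+1)) :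
      VolR A i.castSucc i.succ 0 (Fin.last (m+1)) / (x i.succ - x i.castSucc) =
        1 + VolR B i.castSucc i.succ 0 (Fin.last (m+1)) / (x i.succ - x i.castSucc) := by
    refine div_eq_one_add_of_eq_add (sub_pos.2 (hx i.castSucc_lt_succ)).ne' ?_
    rw [volR_row_add_of_vol_eq_add h, volR_row_of_margin hQ0x hQ1x]
  have hcol (j : Fin (m+1)) :
      VolR A 0 (Fin.last (n+1)) j.castSucc j.succ / (y j.succ - y j.castSucc) =
        1 + VolR B 0 (Fin.last (n+1)) j.castSucc j.succ / (y j.succ - y j.castSucc) := by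
    refine div_eq_one_add_of_eq_add (sub_pos.2 (hy j.castSucc_lt_succ)).ne' ?_
    rw [volR_col_add_of_vol_eq_add h, volR_col_of_margin hQ0y hQ1y]
  simp only [alphaA, hrow, hcol, Real.ciSup_const_add, max_add_add_left]

theorem stmt9_general {n m : ℕ} (x : Fin (n+2) → ℝ) (y : Fin (m+2) → ℝ)
    (Q Qpos Qneg : Fin (n+2) → Fin (m+2) → ℝ)
    (hx : IsMesh x) (hy : IsMesh y) (hQ : IsDiscQuasiCopula x y Q)
    (hpos : ∀ i j, Vol Qpos i j = max (Vol Q i j) 0)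
    (hneg : ∀ i j, Vol Qneg i j = -(min (Vol Q i j) 0)) :
    alphaA x y Qpos - alphaA x y Qneg = 1 := by
  obtain ⟨hQ0x, hQ0y, hQ1x, hQ1y, -⟩ := hQ
  have hsplit (i j) : Vol Qpos i j = Vol Q i j + Vol Qneg i j := by
    linarith [hpos i j, hneg i j, max_add_min (Vol Q i j) 0]
  rw [alphaA_eq_one_add_of_vol_eq_add hx.1 hy.1 hQ0x hQ0y hQ1x hQ1y hsplit]; ring

theorem stmt9 {n m : ℕ} (x : Fin (n+2) → ℝ) (y : Fin (m+2) → ℝ)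
    (Q Qpos Qneg : Fin (n+2) → Fin (m+2) → ℝ)
    (hx : IsMesh x) (hy : IsMesh y) (hQ : IsDiscQuasiCopula x y Q)
    (hproper : ∃ i j, Vol Q i j < 0)
    (hposg1 : ∀ i, Qpos i 0 = 0) (hposg2 : ∀ j, Qpos 0 j = 0)
    (hnegg1 : ∀ i, Qneg i 0 = 0) (hnegg2 : ∀ j, Qneg 0 j = 0)
    (hpos : ∀ i j, Vol Qpos i j = max (Vol Q i j) 0)
    (hneg : ∀ i j, Vol Qneg i j = -(min (Vol Q i j) 0)) :
    alphaA x y Qpos - alphaA x y Qneg = 1 :=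
  stmt9_general x y Q Qpos Qneg hx hy hQ hpos hneg
end

section
/- Every quasi-copula Q on [0,1]² lies in the closure, with respect to the supremum norm, of the linear span of the set of copulas. -/
open Set

/-- A bivariate copula (conditions imposed on the unit square). -/
def IsCopula (C : ℝ → ℝ → ℝ) : Prop :=
  (∀ x ∈ Icc (0:ℝ) 1, C x 0 = 0 ∧ C 0 x = 0 ∧ C x 1 = x ∧ C 1 x = x) ∧
  (∀ x₁ ∈ Icc (0:ℝ) 1, ∀ x₂ ∈ Icc (0:ℝ) 1, ∀ y₁ ∈ Icc (0:ℝ) 1, ∀ y₂ ∈ Icc (0:ℝ) 1,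
    x₁ ≤ x₂ → y₁ ≤ y₂ → 0 ≤ C x₂ y₂ - C x₁ y₂ - C x₂ y₁ + C x₁ y₁)

/-- A bivariate quasi-copula (conditions imposed on the unit square). -/
def IsQuasiCopula (Q : ℝ → ℝ → ℝ) : Prop :=
  (∀ x ∈ Icc (0:ℝ) 1, Q x 0 = 0 ∧ Q 0 x = 0 ∧ Q x 1 = x ∧ Q 1 x = x) ∧
  (∀ x₁ ∈ Icc (0:ℝ) 1, ∀ x₂ ∈ Icc (0:ℝ) 1, ∀ y ∈ Icc (0:ℝ) 1,
    x₁ ≤ x₂ → Q x₁ y ≤ Q x₂ y) ∧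
  (∀ x ∈ Icc (0:ℝ) 1, ∀ y₁ ∈ Icc (0:ℝ) 1, ∀ y₂ ∈ Icc (0:ℝ) 1,
    y₁ ≤ y₂ → Q x y₁ ≤ Q x y₂) ∧
  (∀ x₁ ∈ Icc (0:ℝ) 1, ∀ x₂ ∈ Icc (0:ℝ) 1, ∀ y₁ ∈ Icc (0:ℝ) 1, ∀ y₂ ∈ Icc (0:ℝ) 1,
    |Q x₂ y₂ - Q x₁ y₁| ≤ |x₂ - x₁| + |y₂ - y₁|)

/-- Q-volume of the dyadic rectangle R_{ij}^n = [i/2^n,(i+1)/2^n] × [j/2^n,(j+1)/2^n]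
(indices shifted by one with respect to the paper). -/
noncomputable def dyadVol (Q : ℝ → ℝ → ℝ) (n : ℕ) (i j : Fin (2^n)) : ℝ :=
  Q (((i : ℕ) + 1) / 2^n) (((j : ℕ) + 1) / 2^n)
    - Q ((i : ℕ) / 2^n) (((j : ℕ) + 1) / 2^n)
    - Q (((i : ℕ) + 1) / 2^n) ((j : ℕ) / 2^n)
    + Q ((i : ℕ) / 2^n) ((j : ℕ) / 2^n)

/-- The set of all row/column sums of positive parts of dyadic volumes, normalized by
strip width; α_Q is its supremum. -/
noncomputable def alphaSet (Q : ℝ → ℝ → ℝ) : Set ℝ :=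
  {r | ∃ n : ℕ, 1 ≤ n ∧
    ((∃ i : Fin (2^n), r = 2^n * ∑ j : Fin (2^n), max (dyadVol Q n i j) 0) ∨
     (∃ j : Fin (2^n), r = 2^n * ∑ i : Fin (2^n), max (dyadVol Q n i j) 0))}

/-! Let `G` be the bilinear interpolation of a quasi-copula `Q` on the grid `{0, 1/N, …, 1}²`;
it is within `2/N` of `Q` by the Lipschitz condition. `G` spreads the `Q`-volume `V i j` of each
grid cell uniformly over that cell. These volumes may be negative, but `V i j ≥ -1/N` and every row
and column of them sums to `1/N`. Hence the masses `(V i j + 1/N) / (1 + N)` define a checkerboard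
copula `C`, the masses `1/N²` define the checkerboard copula `Π` (the product copula), and
`G = (1 + N) C - N Π` lies in the span of the copulas. -/

open Finset

/-- `N` times the length of `[0, x] ∩ [i/N, (i+1)/N]`. -/
noncomputable def cellWeight (N i : ℕ) (x : ℝ) : ℝ := max 0 (min (N * x - i) 1)

lemma cellWeight_mono (N i : ℕ) : Monotone (cellWeight N i) := fun _ _ h =>
  max_le_max le_rfl (min_le_min (by gcongr) le_rfl)

lemma cellWeight_eq_one {N i : ℕ} {x : ℝ} (h : (i : ℝ) + 1 ≤ N * x) : cellWeight N i x = 1 := by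
  rw [cellWeight, min_eq_right (by linarith), max_eq_right zero_le_one]

lemma cellWeight_eq_zero {N i : ℕ} {x : ℝ} (h : (N : ℝ) * x ≤ i) : cellWeight N i x = 0 :=
  max_eq_left (min_le_left _ _ |>.trans (by linarith))

lemma cellWeight_zero (N i : ℕ) : cellWeight N i 0 = 0 := cellWeight_eq_zero (by simp)

lemma cellWeight_one {N i : ℕ} (h : i < N) : cellWeight N i 1 = 1 :=
  cellWeight_eq_one (by rw [mul_one]; exact_mod_cast h)

lemma exists_cell {N : ℕ} (hN : 1 ≤ N) {x : ℝ} (hx : x ∈ Icc (0 : ℝ) 1) :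
    ∃ k : ℕ, k + 1 ≤ N ∧ (k : ℝ) ≤ N * x ∧ N * x ≤ k + 1 := by
  have hNx : 0 ≤ (N : ℝ) * x := mul_nonneg (Nat.cast_nonneg N) hx.1
  have hNx' : (N : ℝ) * x ≤ N := mul_le_of_le_one_right (Nat.cast_nonneg N) hx.2
  rcases lt_or_ge ⌊(N : ℝ) * x⌋₊ N with h | h
  · exact ⟨_, h, Nat.floor_le hNx, (Nat.lt_floor_add_one _).le⟩
  · refine ⟨N - 1, by omega, ?_, by rw [Nat.cast_sub hN]; simpa using hNx'⟩
    have : (N : ℝ) ≤ ⌊(N : ℝ) * x⌋₊ := by exact_mod_cast h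
    rw [Nat.cast_sub hN, Nat.cast_one]
    linarith [Nat.floor_le hNx]

lemma sum_mul_cellWeight {N k : ℕ} {x : ℝ} (hk : k + 1 ≤ N) (hxk : (k : ℝ) ≤ N * x)
    (hxk' : N * x ≤ k + 1) (c : ℕ → ℝ) :
    ∑ i ∈ range N, c i * cellWeight N i x
      = (1 - (N * x - k)) * ∑ i ∈ range k, c i + (N * x - k) * ∑ i ∈ range (k + 1), c i := by
  have hzero : ∀ i ∈ range N, i ∉ range (k + 1) → c i * cellWeight N i x = 0 := by
    intro i _ hi
    have : (k : ℝ) + 1 ≤ i := by exact_mod_cast not_lt.mp (mt mem_range.mpr hi)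
    rw [cellWeight_eq_zero (by linarith), mul_zero]
  have hone : ∀ i ∈ range k, c i * cellWeight N i x = c i := by
    intro i hi
    have : (i : ℝ) + 1 ≤ k := by exact_mod_cast mem_range.mp hi
    rw [cellWeight_eq_one (by linarith), mul_one]
  have hk_weight : cellWeight N k x = N * x - k := by
    rw [cellWeight, min_eq_left (by linarith), max_eq_right (by linarith)]
  rw [← sum_subset (range_subset_range.mpr hk) hzero, sum_range_succ, sum_congr rfl hone,
    hk_weight, sum_range_succ]
  ring

lemma sum_cellWeight {N : ℕ} (hN : 1 ≤ N) {x : ℝ} (hx : x ∈ Icc (0 : ℝ) 1) :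
    ∑ i ∈ range N, cellWeight N i x = N * x := by
  obtain ⟨k, hk, hxk, hxk'⟩ := exists_cell hN hx
  have := sum_mul_cellWeight hk hxk hxk' 1
  simp only [Pi.one_apply, one_mul, sum_const, card_range, nsmul_one, Nat.cast_add,
    Nat.cast_one] at this
  linarith

/-- The function whose mixed second derivative is `N² m i j` on the cell
`[i/N, (i+1)/N] × [j/N, (j+1)/N]`, i.e. mass `m i j` spread uniformly over that cell. -/
noncomputable def checkerboard (N : ℕ) : (ℕ → ℕ → ℝ) →ₗ[ℝ] ℝ → ℝ → ℝ where
  toFun m x y := ∑ i ∈ range N, ∑ j ∈ range N, m i j * (cellWeight N i x * cellWeight N j y)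
  map_add' m m' := by
    ext x y
    simp only [Pi.add_apply, add_mul, sum_add_distrib]
  map_smul' c m := by
    ext x y
    simp only [Pi.smul_apply, smul_eq_mul, RingHom.id_apply, mul_sum, mul_assoc]

lemma checkerboard_apply (N : ℕ) (m : ℕ → ℕ → ℝ) (x y : ℝ) :
    checkerboard N m x y
      = ∑ i ∈ range N, ∑ j ∈ range N, m i j * (cellWeight N i x * cellWeight N j y) :=
  rfl

lemma checkerboard_isCopula {N : ℕ} (hN : 1 ≤ N) {m : ℕ → ℕ → ℝ}
    (hm : ∀ i < N, ∀ j < N, 0 ≤ m i j)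
    (hrow : ∀ i < N, ∑ j ∈ range N, m i j = 1 / N)
    (hcol : ∀ j < N, ∑ i ∈ range N, m i j = 1 / N) :
    IsCopula (checkerboard N m) := by
  have hN0 : (N : ℝ) ≠ 0 := by positivity
  refine ⟨fun x hx => ⟨?_, ?_, ?_, ?_⟩, fun x₁ _ x₂ _ y₁ _ y₂ _ hx hy => ?_⟩
  · simp [checkerboard_apply, cellWeight_zero]
  · simp [checkerboard_apply, cellWeight_zero]
  · have hrow' : ∀ i ∈ range N, ∑ j ∈ range N, m i j * (cellWeight N i x * cellWeight N j 1)
        = 1 / N * cellWeight N i x := by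
      intro i hi
      rw [← hrow i (mem_range.mp hi), sum_mul]
      refine sum_congr rfl fun j hj => ?_
      rw [cellWeight_one (mem_range.mp hj), mul_one]
    rw [checkerboard_apply, sum_congr rfl hrow', ← mul_sum, sum_cellWeight hN hx]
    field_simp
  · have hcol' : ∀ j ∈ range N, ∑ i ∈ range N, m i j * (cellWeight N i 1 * cellWeight N j x)
        = 1 / N * cellWeight N j x := by
      intro j hj
      rw [← hcol j (mem_range.mp hj), sum_mul]
      refine sum_congr rfl fun i hi => ?_
      rw [cellWeight_one (mem_range.mp hi), one_mul]
    rw [checkerboard_apply, sum_comm, sum_congr rfl hcol', ← mul_sum, sum_cellWeight hN hx]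
    field_simp
  · have hvol : checkerboard N m x₂ y₂ - checkerboard N m x₁ y₂ - checkerboard N m x₂ y₁
          + checkerboard N m x₁ y₁
        = ∑ i ∈ range N, ∑ j ∈ range N, m i j *
            ((cellWeight N i x₂ - cellWeight N i x₁) * (cellWeight N j y₂ - cellWeight N j y₁)) := by
      simp only [checkerboard_apply, ← sum_sub_distrib, ← sum_add_distrib]
      exact sum_congr rfl fun i _ => sum_congr rfl fun j _ => by ring
    rw [hvol]
    refine sum_nonneg fun i hi => sum_nonneg fun j hj => mul_nonneg
      (hm i (mem_range.mp hi) j (mem_range.mp hj)) (mul_nonneg ?_ ?_)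
    · exact sub_nonneg.mpr (cellWeight_mono N i hx)
    · exact sub_nonneg.mpr (cellWeight_mono N j hy)

lemma checkerboard_eq_bilinear {N k l : ℕ} (m : ℕ → ℕ → ℝ) {x y : ℝ}
    (hk : k + 1 ≤ N) (hxk : (k : ℝ) ≤ N * x) (hxk' : N * x ≤ k + 1)
    (hl : l + 1 ≤ N) (hyl : (l : ℝ) ≤ N * y) (hyl' : N * y ≤ l + 1) :
    let M a b := ∑ i ∈ range a, ∑ j ∈ range b, m i j
    checkerboard N m x y
      = (1 - (N * x - k)) * ((1 - (N * y - l)) * M k l + (N * y - l) * M k (l + 1))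
        + (N * x - k) * ((1 - (N * y - l)) * M (k + 1) l + (N * y - l) * M (k + 1) (l + 1)) := by
  intro M
  have hcol : ∀ a, ∑ i ∈ range a, ∑ j ∈ range N, m i j * cellWeight N j y
      = (1 - (N * y - l)) * M a l + (N * y - l) * M a (l + 1) := by
    intro a
    simp only [M, sum_comm (s := range a), ← sum_mul_cellWeight hl hyl hyl', sum_mul]
  have hrow : checkerboard N m x y
      = ∑ i ∈ range N, (∑ j ∈ range N, m i j * cellWeight N j y) * cellWeight N i x := by
    simp only [checkerboard_apply, sum_mul]
    exact sum_congr rfl fun i _ => sum_congr rfl fun j _ => by ring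
  rw [hrow, sum_mul_cellWeight hk hxk hxk', hcol, hcol]

def gridVol (g : ℕ → ℕ → ℝ) (i j : ℕ) : ℝ := g (i + 1) (j + 1) - g i (j + 1) - g (i + 1) j + g i j

lemma sum_gridVol_row (g : ℕ → ℕ → ℝ) (i l : ℕ) :
    ∑ j ∈ range l, gridVol g i j = g (i + 1) l - g i l - (g (i + 1) 0 - g i 0) := by
  rw [← sum_range_sub (fun j => g (i + 1) j - g i j)]
  exact sum_congr rfl fun j _ => by rw [gridVol]; ring

lemma sum_gridVol_col (g : ℕ → ℕ → ℝ) (j k : ℕ) :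
    ∑ i ∈ range k, gridVol g i j = g k (j + 1) - g k j - (g 0 (j + 1) - g 0 j) := by
  rw [← sum_range_sub (fun i => g i (j + 1) - g i j)]
  exact sum_congr rfl fun i _ => by rw [gridVol]; ring

lemma sum_sum_gridVol (g : ℕ → ℕ → ℝ) (k l : ℕ) :
    ∑ i ∈ range k, ∑ j ∈ range l, gridVol g i j = g k l - g 0 l - (g k 0 - g 0 0) := by
  simp only [sum_gridVol_row]
  rw [show g k l - g 0 l - (g k 0 - g 0 0) = g k l - g k 0 - (g 0 l - g 0 0) by ring,
    ← sum_range_sub (fun i => g i l - g i 0)]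
  exact sum_congr rfl fun i _ => by ring

noncomputable def gridSample (Q : ℝ → ℝ → ℝ) (N : ℕ) (i j : ℕ) : ℝ := Q (i / N) (j / N)

section QuasiCopula

variable {Q : ℝ → ℝ → ℝ} {N : ℕ}

lemma div_mem_Icc_of_le (hN : 1 ≤ N) {i : ℕ} (hi : i ≤ N) : (i : ℝ) / N ∈ Icc (0 : ℝ) 1 :=
  ⟨by positivity, div_le_one_of_le₀ (by exact_mod_cast hi) (Nat.cast_nonneg N)⟩

lemma gridSample_zero_left (hQ : IsQuasiCopula Q) (hN : 1 ≤ N) {j : ℕ} (hj : j ≤ N) :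
    gridSample Q N 0 j = 0 := by
  simpa [gridSample] using (hQ.1 _ (div_mem_Icc_of_le hN hj)).2.1

lemma gridSample_zero_right (hQ : IsQuasiCopula Q) (hN : 1 ≤ N) {i : ℕ} (hi : i ≤ N) :
    gridSample Q N i 0 = 0 := by
  simpa [gridSample] using (hQ.1 _ (div_mem_Icc_of_le hN hi)).1

lemma gridSample_right (hQ : IsQuasiCopula Q) (hN : 1 ≤ N) {i : ℕ} (hi : i ≤ N) :
    gridSample Q N i N = i / N := by
  have hN0 : (N : ℝ) ≠ 0 := by positivity
  simpa [gridSample, hN0] using (hQ.1 _ (div_mem_Icc_of_le hN hi)).2.2.1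

lemma gridSample_left (hQ : IsQuasiCopula Q) (hN : 1 ≤ N) {j : ℕ} (hj : j ≤ N) :
    gridSample Q N N j = j / N := by
  have hN0 : (N : ℝ) ≠ 0 := by positivity
  simpa [gridSample, hN0] using (hQ.1 _ (div_mem_Icc_of_le hN hj)).2.2.2

lemma sum_sum_gridVol_gridSample (hQ : IsQuasiCopula Q) (hN : 1 ≤ N) {k l : ℕ} (hk : k ≤ N)
    (hl : l ≤ N) :
    ∑ i ∈ range k, ∑ j ∈ range l, gridVol (gridSample Q N) i j = gridSample Q N k l := by
  rw [sum_sum_gridVol, gridSample_zero_left hQ hN hl, gridSample_zero_right hQ hN hk,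
    gridSample_zero_left hQ hN N.zero_le]
  ring

lemma sum_gridVol_gridSample_row (hQ : IsQuasiCopula Q) (hN : 1 ≤ N) {i : ℕ} (hi : i < N) :
    ∑ j ∈ range N, gridVol (gridSample Q N) i j = 1 / N := by
  rw [sum_gridVol_row, gridSample_right hQ hN hi, gridSample_right hQ hN hi.le,
    gridSample_zero_right hQ hN hi, gridSample_zero_right hQ hN hi.le]
  push_cast
  ring

lemma sum_gridVol_gridSample_col (hQ : IsQuasiCopula Q) (hN : 1 ≤ N) {j : ℕ} (hj : j < N) :
    ∑ i ∈ range N, gridVol (gridSample Q N) i j = 1 / N := by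
  rw [sum_gridVol_col, gridSample_left hQ hN hj, gridSample_left hQ hN hj.le,
    gridSample_zero_left hQ hN hj, gridSample_zero_left hQ hN hj.le]
  push_cast
  ring

/-- The increment of `Q` along the top edge of the cell is nonnegative, and along the bottom edge
it is at most `1/N`. -/
lemma neg_one_div_le_gridVol_gridSample (hQ : IsQuasiCopula Q) (hN : 1 ≤ N) {i j : ℕ} (hi : i < N)
    (hj : j < N) :
    -(1 / N) ≤ gridVol (gridSample Q N) i j := by
  have mi := div_mem_Icc_of_le hN hi.le
  have mi' := div_mem_Icc_of_le hN (Nat.succ_le_of_lt hi)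
  have mj := div_mem_Icc_of_le hN hj.le
  have mj' := div_mem_Icc_of_le hN (Nat.succ_le_of_lt hj)
  have htop := hQ.2.1 _ mi _ mi' _ mj' (by gcongr; exact Nat.le_succ i)
  have hbot := hQ.2.2.2 _ mi _ mi' _ mj _ mj
  have hstep : |((i + 1 : ℕ) : ℝ) / N - i / N| = 1 / N := by
    rw [Nat.cast_succ, ← sub_div, add_sub_cancel_left, abs_of_pos (by positivity)]
  rw [hstep, sub_self, abs_zero, add_zero] at hbot
  simp only [gridVol, gridSample]
  linarith [(abs_le.mp hbot).2]

end QuasiCopula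

lemma abs_convex_comb_le {t a b M : ℝ} (ht₀ : 0 ≤ t) (ht₁ : t ≤ 1) (ha : |a| ≤ M) (hb : |b| ≤ M) :
    |(1 - t) * a + t * b| ≤ M :=
  calc |(1 - t) * a + t * b| ≤ (1 - t) * |a| + t * |b| := by
        refine (abs_add_le _ _).trans_eq ?_
        rw [abs_mul, abs_mul, abs_of_nonneg (sub_nonneg.mpr ht₁), abs_of_nonneg ht₀]
    _ ≤ (1 - t) * M + t * M := by gcongr
    _ = M := by ring

lemma abs_sub_div_le_of_mem_cell {N k a : ℕ} (hN : 1 ≤ N) {x : ℝ} (hxk : (k : ℝ) ≤ N * x)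
    (hxk' : N * x ≤ k + 1) (ha : a = k ∨ a = k + 1) :
    |x - a / N| ≤ 1 / N := by
  have hNpos : (0 : ℝ) < N := by positivity
  rw [show x - a / N = (N * x - a) / N by field_simp, abs_div, abs_of_pos hNpos]
  gcongr
  rcases ha with rfl | rfl <;> rw [abs_le] <;> push_cast <;> constructor <;> linarith

lemma abs_sub_checkerboard_gridVol_le {Q : ℝ → ℝ → ℝ} (hQ : IsQuasiCopula Q) {N : ℕ}
    (hN : 1 ≤ N) {x y : ℝ} (hx : x ∈ Icc (0 : ℝ) 1) (hy : y ∈ Icc (0 : ℝ) 1) :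
    |Q x y - checkerboard N (gridVol (gridSample Q N)) x y| ≤ 2 / N := by
  obtain ⟨k, hk, hxk, hxk'⟩ := exists_cell hN hx
  obtain ⟨l, hl, hyl, hyl'⟩ := exists_cell hN hy
  have hcorner : ∀ a b : ℕ, a = k ∨ a = k + 1 → b = l ∨ b = l + 1 →
      |Q x y - gridSample Q N a b| ≤ 2 / N := by
    rintro a b ha hb
    have haN : a ≤ N := by omega
    have hbN : b ≤ N := by omega
    calc |Q x y - gridSample Q N a b|
        ≤ |x - a / N| + |y - b / N| :=
          hQ.2.2.2 _ (div_mem_Icc_of_le hN haN) _ hx _ (div_mem_Icc_of_le hN hbN) _ hy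
      _ ≤ 1 / N + 1 / N := add_le_add (abs_sub_div_le_of_mem_cell hN hxk hxk' ha)
          (abs_sub_div_le_of_mem_cell hN hyl hyl' hb)
      _ = 2 / N := by ring
  rw [checkerboard_eq_bilinear _ hk hxk hxk' hl hyl hyl']
  dsimp only
  rw [sum_sum_gridVol_gridSample hQ hN (by omega) (by omega),
    sum_sum_gridVol_gridSample hQ hN (by omega) (by omega),
    sum_sum_gridVol_gridSample hQ hN (by omega) (by omega),
    sum_sum_gridVol_gridSample hQ hN (by omega) (by omega)]
  set θ : ℝ := N * x - k
  set φ : ℝ := N * y - l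
  have hθ₀ : 0 ≤ θ := sub_nonneg.mpr hxk
  have hθ₁ : θ ≤ 1 := by linarith
  have hφ₀ : 0 ≤ φ := sub_nonneg.mpr hyl
  have hφ₁ : φ ≤ 1 := by linarith
  rw [show ∀ q c₀₀ c₀₁ c₁₀ c₁₁ : ℝ,
      q - ((1 - θ) * ((1 - φ) * c₀₀ + φ * c₀₁) + θ * ((1 - φ) * c₁₀ + φ * c₁₁))
        = (1 - θ) * ((1 - φ) * (q - c₀₀) + φ * (q - c₀₁))
          + θ * ((1 - φ) * (q - c₁₀) + φ * (q - c₁₁)) by intros; ring]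
  refine abs_convex_comb_le hθ₀ hθ₁ (abs_convex_comb_le hφ₀ hφ₁ ?_ ?_)
    (abs_convex_comb_le hφ₀ hφ₁ ?_ ?_) <;>
  exact hcorner _ _ (by simp) (by simp)

lemma checkerboard_gridVol_mem_span {Q : ℝ → ℝ → ℝ} (hQ : IsQuasiCopula Q) {N : ℕ} (hN : 1 ≤ N) :
    checkerboard N (gridVol (gridSample Q N)) ∈ Submodule.span ℝ {f : ℝ → ℝ → ℝ | IsCopula f} := by
  let m : ℕ → ℕ → ℝ := fun i j => (gridVol (gridSample Q N) i j + 1 / N) / (1 + N)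
  let u : ℕ → ℕ → ℝ := fun _ _ => 1 / N ^ 2
  have hm : IsCopula (checkerboard N m) := by
    refine checkerboard_isCopula hN (fun i hi j hj => ?_) (fun i hi => ?_) (fun j hj => ?_)
    · have := neg_one_div_le_gridVol_gridSample hQ hN hi hj
      exact div_nonneg (by linarith) (by positivity)
    · simp only [m, ← sum_div, sum_add_distrib, sum_gridVol_gridSample_row hQ hN hi]
      field_simp
      simp
    · simp only [m, ← sum_div, sum_add_distrib, sum_gridVol_gridSample_col hQ hN hj]
      field_simp
      simp
  have hu : IsCopula (checkerboard N u) := by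
    refine checkerboard_isCopula hN (fun _ _ _ _ => by positivity) (fun _ _ => ?_) (fun _ _ => ?_)
    all_goals
      simp only [u, sum_const, card_range, nsmul_eq_mul]
      field_simp
  have hV : gridVol (gridSample Q N) = (1 + N : ℝ) • m - (N : ℝ) • u := by
    ext i j
    simp only [m, u, Pi.sub_apply, Pi.smul_apply, smul_eq_mul]
    field_simp
    ring
  rw [hV, map_sub, map_smul, map_smul]
  exact Submodule.sub_mem _ (Submodule.smul_mem _ _ (Submodule.subset_span hm))
    (Submodule.smul_mem _ _ (Submodule.subset_span hu))

theorem stmt12 (Q : ℝ → ℝ → ℝ) (hQ : IsQuasiCopula Q) :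
    ∀ ε > (0:ℝ), ∃ f ∈ Submodule.span ℝ {f : ℝ → ℝ → ℝ | IsCopula f},
      ∀ x ∈ Icc (0:ℝ) 1, ∀ y ∈ Icc (0:ℝ) 1, |Q x y - f x y| ≤ ε := by
  intro ε hε
  obtain ⟨N, hN⟩ := exists_nat_gt (2 / ε)
  have hNpos : (0 : ℝ) < N := (div_pos two_pos hε).trans hN
  have hN₁ : 1 ≤ N := by exact_mod_cast hNpos
  have h2N : 2 / (N : ℝ) ≤ ε := (div_le_iff₀ hNpos).mpr (by rw [div_lt_iff₀ hε] at hN; linarith)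
  exact ⟨_, checkerboard_gridVol_mem_span hQ hN₁,
    fun x hx y hy => (abs_sub_checkerboard_gridVol_le hQ hN₁ hx hy).trans h2N⟩
end
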